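/- Let κ be a measurable cardinal, let 1 ≤ d < ω and 1 ≤ σ < κ, and assume SDHL(d,σ,κ) holds. Then the set {α < κ : α is an infinite cardinal, σ < α, and SDHL(d,σ,α) holds} is a stationary subset of κ. -/

import Mathlib

open Cardinal Set

/-- A node of `^{<κ}κ`: a function from an ordinal `len < κ` into the ordinals `< κ`,
normalized to take value `0` at or beyond its length (so that equality of nodes is
extensional). -/
structure SeqNode (κ : Cardinal.{0}) : Type 1 where
  len : Ordinal.{0}
  len_lt : len < κ.ord
  val : Ordinal.{0} → Ordinal.{0}
  val_lt : ∀ β < len, val β < κ.ord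
  val_eq_zero : ∀ β, len ≤ β → val β = 0

namespace SeqNode

variable {κ : Cardinal.{0}}

/-- `s.Init t` means `s ⊑ t`, i.e. `s` is an initial segment of `t`. -/
def Init (s t : SeqNode κ) : Prop :=
  s.len ≤ t.len ∧ ∀ β < s.len, s.val β = t.val β

/-- The restriction `t ↾ β` of `t` to length `min β t.len`. -/
noncomputable def restrict (t : SeqNode κ) (β : Ordinal.{0}) : SeqNode κ where
  len := min β t.len
  len_lt := lt_of_le_of_lt (min_le_right _ _) t.len_lt
  val := fun γ => if γ < min β t.len then t.val γ else 0
  val_lt := fun γ hγ => by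
    try dsimp only
    rw [if_pos hγ]
    exact t.val_lt γ (lt_of_lt_of_le hγ (min_le_right _ _))
  val_eq_zero := fun γ hγ => by
    try dsimp only
    rw [if_neg (not_lt.mpr hγ)]

end SeqNode

/-- The level `T(α)`: nodes of `T` of length `α`. -/
def SeqLevel {κ : Cardinal.{0}} (T : Set (SeqNode κ)) (α : Ordinal.{0}) : Set (SeqNode κ) :=
  {t ∈ T | t.len = α}

/-- A tree: a set of nodes closed under initial segments. -/
def IsSeqTree {κ : Cardinal.{0}} (T : Set (SeqNode κ)) : Prop :=
  ∀ t ∈ T, ∀ s : SeqNode κ, s.Init t → s ∈ T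

/-- A branch of `T`: a subset of `T` linearly ordered by the initial segment relation. -/
def IsBranch {κ : Cardinal.{0}} (T b : Set (SeqNode κ)) : Prop :=
  b ⊆ T ∧ ∀ s ∈ b, ∀ t ∈ b, s.Init t ∨ t.Init s

/-- A maximal branch of `T`. -/
def IsMaximalBranch {κ : Cardinal.{0}} (T b : Set (SeqNode κ)) : Prop :=
  IsBranch T b ∧ ∀ b' : Set (SeqNode κ), IsBranch T b' → b ⊆ b' → b' = b

/-- `T` is perfect: every node has two incomparable extensions in `T`. -/
def IsPerfect {κ : Cardinal.{0}} (T : Set (SeqNode κ)) : Prop :=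
  ∀ t ∈ T, ∃ s ∈ T, ∃ u ∈ T, t.Init s ∧ t.Init u ∧ ¬ s.Init u ∧ ¬ u.Init s

/-- `T ⊆ ^{<κ}κ` is a regular tree of height `η`: it is a tree all of whose nodes
have length `< η`, it has nonempty levels of cardinality `< η.card` at every `α < η`,
every maximal branch meets every level `< η`, and it is perfect. -/
def IsRegularTreeIn (κ : Cardinal.{0}) (η : Ordinal.{0}) (T : Set (SeqNode κ)) : Prop :=
  IsSeqTree T ∧
  (∀ t ∈ T, t.len < η) ∧
  (∀ α < η, (SeqLevel T α).Nonempty) ∧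
  (∀ α < η, Cardinal.mk ↥(SeqLevel T α) < Cardinal.lift.{1} η.card) ∧
  (∀ b : Set (SeqNode κ), IsMaximalBranch T b → ∀ α < η, ∃ t ∈ b, t.len = α) ∧
  IsPerfect T

/-- A regular `κ`-tree. -/
def IsRegularTree (κ : Cardinal.{0}) (T : Set (SeqNode κ)) : Prop :=
  IsRegularTreeIn κ κ.ord T

/-- The truncation `T ∩ ^{<α}κ` of `T` below level `α`. -/
def TreeTrunc {κ : Cardinal.{0}} (T : Set (SeqNode κ)) (α : Ordinal.{0}) : Set (SeqNode κ) :=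
  {t ∈ T | t.len < α}

/-- The level product `⊗_{i<d} X_i`: tuples all of whose entries lie on one common level. -/
def LevelProd {κ : Cardinal.{0}} {d : ℕ} (X : Fin d → Set (SeqNode κ)) :
    Set (Fin d → SeqNode κ) :=
  {x | ∃ α : Ordinal.{0}, ∀ i, x i ∈ X i ∧ (x i).len = α}

/-- `X` dominates `Y`: every element of `Y` has an extension in `X`. -/
def Dominates {κ : Cardinal.{0}} (X Y : Set (SeqNode κ)) : Prop :=
  ∀ y ∈ Y, ∃ x ∈ X, SeqNode.Init y x

/-- `Cone t`: all extensions of `t`. -/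
def Cone {κ : Cardinal.{0}} (t : SeqNode κ) : Set (SeqNode κ) :=
  {s : SeqNode κ | t.Init s}

/-- `X` is a somewhere dense level matrix for trees `T` of height `η`. -/
def IsSDMatrixIn {κ : Cardinal.{0}} (η : Ordinal.{0}) {d : ℕ}
    (T X : Fin d → Set (SeqNode κ)) : Prop :=
  ∃ α β : Ordinal.{0}, α < β ∧ β < η ∧
    ∃ t : Fin d → SeqNode κ,
      (∀ i, t i ∈ SeqLevel (T i) α) ∧
      ∀ i, X i ⊆ SeqLevel (T i) β ∧
        Dominates (X i) (SeqLevel (T i) (α + 1) ∩ Cone (t i))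

/-- `X` is a somewhere dense level matrix for the regular `κ`-trees `T`. -/
def IsSDMatrix (κ : Cardinal.{0}) {d : ℕ} (T X : Fin d → Set (SeqNode κ)) : Prop :=
  IsSDMatrixIn κ.ord T X

/-- The coloring `c` is constant (monochromatic) on the level product of `X`. -/
def MonoOn {κ : Cardinal.{0}} {d : ℕ} (c : (Fin d → SeqNode κ) → Ordinal.{0})
    (X : Fin d → Set (SeqNode κ)) : Prop :=
  ∀ x ∈ LevelProd X, ∀ y ∈ LevelProd X, c x = c y

/-- The somewhere dense Halpern–Läuchli theorem `SDHL(d,σ,κ)`. -/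
def SDHL (d : ℕ) (σ κ : Cardinal.{0}) : Prop :=
  ∀ T : Fin d → Set (SeqNode κ), (∀ i, IsRegularTree κ (T i)) →
    ∀ c : (Fin d → SeqNode κ) → Ordinal.{0},
      (∀ x ∈ LevelProd T, c x < σ.ord) →
      ∃ X : Fin d → Set (SeqNode κ), (∀ i, X i ⊆ T i) ∧
        IsSDMatrix κ T X ∧ MonoOn c X

/-- `s` is an immediate successor of `t`. -/
def IsImmediateSucc {κ : Cardinal.{0}} (t s : SeqNode κ) : Prop :=
  t.Init s ∧ s.len = t.len + 1

/-- `A` is a cofinal subset of (the ordinals below) `η`. -/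
def CofinalIn (A : Set Ordinal.{0}) (η : Ordinal.{0}) : Prop :=
  A ⊆ Set.Iio η ∧ ∀ β < η, ∃ α ∈ A, β ≤ α

/-- `T'` is a strong subtree of the regular `κ`-tree `T` witnessed by the cofinal set
`A ⊆ κ` of splitting levels. -/
def IsStrongSubtree (κ : Cardinal.{0}) (T' T : Set (SeqNode κ)) (A : Set Ordinal.{0}) : Prop :=
  T' ⊆ T ∧ IsRegularTree κ T' ∧ CofinalIn A κ.ord ∧
    ∀ t ∈ T',
      (t.len ∈ A → ∀ s ∈ T, IsImmediateSucc t s → s ∈ T') ∧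
      (t.len ∉ A → ∃! s : SeqNode κ, s ∈ T' ∧ IsImmediateSucc t s)

/-- The strong tree Halpern–Läuchli theorem `HL(d,σ,κ)`. -/
def HL (d : ℕ) (σ κ : Cardinal.{0}) : Prop :=
  ∀ T : Fin d → Set (SeqNode κ), (∀ i, IsRegularTree κ (T i)) →
    ∀ c : (Fin d → SeqNode κ) → Ordinal.{0},
      (∀ x ∈ LevelProd T, c x < σ.ord) →
      ∃ T' : Fin d → Set (SeqNode κ), ∃ A : Set Ordinal.{0},
        (∀ i, IsStrongSubtree κ (T' i) (T i) A) ∧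
        ∀ x : Fin d → SeqNode κ, (∃ α ∈ A, ∀ i, x i ∈ SeqLevel (T' i) α) →
          ∀ y : Fin d → SeqNode κ, (∃ α ∈ A, ∀ i, y i ∈ SeqLevel (T' i) α) →
            c x = c y

/-- `e` is the increasing enumeration (along the ordinals below `η`) of `A`. -/
def IsIncreasingEnum (e : Ordinal.{0} → Ordinal.{0}) (η : Ordinal.{0})
    (A : Set Ordinal.{0}) : Prop :=
  (∀ ζ < η, e ζ ∈ A) ∧
  (∀ ζ ξ : Ordinal.{0}, ζ < ξ → ξ < η → e ζ < e ξ) ∧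
  (∀ a ∈ A, ∃ ζ < η, e ζ = a)

/-- The tail cone Halpern–Läuchli theorem `HL^tc(d,<κ,κ)`. -/
def HLtc (d : ℕ) (κ : Cardinal.{0}) : Prop :=
  ∀ T : Fin d → Set (SeqNode κ), (∀ i, IsRegularTree κ (T i)) →
    ∀ σ : Ordinal.{0} → Cardinal.{0}, (∀ ζ < κ.ord, 0 < σ ζ ∧ σ ζ < κ) →
      ∀ c : Ordinal.{0} → (Fin d → SeqNode κ) → Ordinal.{0},
        (∀ ζ < κ.ord, ∀ x ∈ LevelProd T, c ζ x < (σ ζ).ord) →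
        ∃ T' : Fin d → Set (SeqNode κ), ∃ A : Set Ordinal.{0},
          ∃ e : Ordinal.{0} → Ordinal.{0},
            (∀ i, IsStrongSubtree κ (T' i) (T i) A) ∧
            IsIncreasingEnum e κ.ord A ∧
            ∀ ζ ξ : Ordinal.{0}, ζ ≤ ξ → ξ < κ.ord →
              ∀ t : Fin d → SeqNode κ, (∀ i, t i ∈ SeqLevel (T' i) (e ξ)) →
                c ζ t = c ζ (fun i => (t i).restrict (e ζ))

/-- The modified tail cone Halpern–Läuchli theorem. -/
def HLtcMod (d : ℕ) (κ : Cardinal.{0}) : Prop :=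
  ∀ T : Fin d → Set (SeqNode κ), (∀ i, IsRegularTree κ (T i)) →
    ∀ σ : Ordinal.{0} → Cardinal.{0}, (∀ ζ < κ.ord, 0 < σ ζ ∧ σ ζ < κ) →
      ∀ c : Ordinal.{0} → (Fin d → SeqNode κ) → Ordinal.{0},
        (∀ ζ < κ.ord, ∀ x ∈ LevelProd T, c ζ x < (σ ζ).ord) →
        ∃ T' : Fin d → Set (SeqNode κ), ∃ A : Set Ordinal.{0},
          ∃ e : Ordinal.{0} → Ordinal.{0},
            (∀ i, IsStrongSubtree κ (T' i) (T i) A) ∧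
            IsIncreasingEnum e κ.ord A ∧
            ∃ μ : Ordinal.{0} → Ordinal.{0},
              (∀ γ < κ.ord, γ ≤ μ γ ∧ μ γ < κ.ord) ∧
              ∀ ζ γ : Ordinal.{0}, ζ ≤ γ → γ < κ.ord →
                ∀ t : Fin d → SeqNode κ, (∀ i, t i ∈ SeqLevel (T' i) (e γ)) →
                  c (μ ζ) t = c (μ ζ) (fun i => (t i).restrict (e ζ))

/-- `κ` is strongly inaccessible: uncountable, regular, and a strong limit. -/
def StronglyInaccessible (κ : Cardinal.{0}) : Prop :=
  ℵ₀ < κ ∧ κ.IsRegular ∧ ∀ lam : Cardinal.{0}, lam < κ → (2 : Cardinal.{0}) ^ lam < κ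

/-- `C` is a club (closed unbounded) subset of the ordinals below `η`. -/
def IsClubIn (C : Set Ordinal.{0}) (η : Ordinal.{0}) : Prop :=
  C ⊆ Set.Iio η ∧ (∀ β < η, ∃ γ ∈ C, β ≤ γ) ∧
    ∀ s ⊆ C, s.Nonempty → sSup s < η → sSup s ∈ C

/-- `S` is a stationary subset of the ordinals below `η`. -/
def IsStationaryIn (S : Set Ordinal.{0}) (η : Ordinal.{0}) : Prop :=
  ∀ C : Set Ordinal.{0}, IsClubIn C η → (S ∩ C).Nonempty

/-- `U` is an ultrafilter on the ordinals below `η`. -/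
def IsUltrafilterOn (U : Set (Set Ordinal.{0})) (η : Ordinal.{0}) : Prop :=
  (∀ A ∈ U, A ⊆ Set.Iio η) ∧ Set.Iio η ∈ U ∧ (∅ : Set Ordinal.{0}) ∉ U ∧
  (∀ A ∈ U, ∀ B : Set Ordinal.{0}, A ⊆ B → B ⊆ Set.Iio η → B ∈ U) ∧
  (∀ A ∈ U, ∀ B ∈ U, A ∩ B ∈ U) ∧
  (∀ A : Set Ordinal.{0}, A ⊆ Set.Iio η → (A ∈ U ∨ Set.Iio η \ A ∈ U))

/-- `U` is `κ`-complete: closed under intersections of fewer than `κ` of its members. -/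
def IsKappaComplete (U : Set (Set Ordinal.{0})) (κ : Cardinal.{0}) : Prop :=
  ∀ s : Set (Set Ordinal.{0}), s ⊆ U → s.Nonempty →
    Cardinal.mk ↥s < Cardinal.lift.{1} κ → ⋂₀ s ∈ U

/-- `U` is nonprincipal. -/
def IsNonprincipal (U : Set (Set Ordinal.{0})) : Prop :=
  ∀ β : Ordinal.{0}, ({β} : Set Ordinal.{0}) ∉ U

/-- `U` is a normal ultrafilter on `κ`: a nonprincipal `κ`-complete ultrafilter closed
under diagonal intersections. -/
def IsNormalUltrafilterOn (U : Set (Set Ordinal.{0})) (κ : Cardinal.{0}) : Prop :=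
  IsUltrafilterOn U κ.ord ∧ IsKappaComplete U κ ∧ IsNonprincipal U ∧
    ∀ A : Ordinal.{0} → Set Ordinal.{0}, (∀ α < κ.ord, A α ∈ U) →
      {β : Ordinal.{0} | β < κ.ord ∧ ∀ α < β, β ∈ A α} ∈ U

/-- `κ` is a measurable cardinal. -/
def IsMeasurableCard (κ : Cardinal.{0}) : Prop :=
  ℵ₀ < κ ∧ ∃ U : Set (Set Ordinal.{0}),
    IsUltrafilterOn U κ.ord ∧ IsKappaComplete U κ ∧ IsNonprincipal U

/-- The set of (ordinals which are) infinite cardinals `α < κ` with `σ < α` at which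
`SDHL(d,σ,α)` holds, viewed as a set of ordinals below `κ`. -/
def SDHLset (d : ℕ) (σ κ : Cardinal.{0}) : Set Ordinal.{0} :=
  {β : Ordinal.{0} | β < κ.ord ∧ ℵ₀ ≤ β.card ∧ β.card.ord = β ∧ σ < β.card ∧
    SDHL d σ β.card}


/-!
Fix a normal measure `U` on `κ` and suppose `SDHL(d,σ,β)` fails for `U`-almost every `β`, with
counterexamples `(T_β, c_β)`. Take their `U`-limits: a node belongs to the limit tree when it lies
in `T_β` for almost every `β`, and the limit coloring takes the almost-everywhere value of
`c_β`. Normality lets one press down families of nodes to a single node, which makes the limit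
trees regular `κ`-trees, so `SDHL(d,σ,κ)` yields a monochromatic somewhere dense matrix for
them. That matrix has fewer than `κ` nodes, so by `κ`-completeness it is also a monochromatic
somewhere dense matrix for `(T_β, c_β)` for almost every `β`, a contradiction. Hence `SDHL(d,σ,β)`
holds for `U`-positively many `β`, and since every club, as well as the set of infinite cardinals
in `(σ, κ)`, is `U`-large, these `β` meet every club.
-/

universe u v

open Filter

namespace SeqNode

variable {κ μ : Cardinal.{0}}

theorem ext {s t : SeqNode κ} (hlen : s.len = t.len) (hval : s.val = t.val) : s = t := by
  cases s; cases t
  cases hlen; cases hval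
  rfl

theorem val_lt_ord (t : SeqNode κ) (δ : Ordinal.{0}) : t.val δ < κ.ord := by
  rcases lt_or_ge δ t.len with h | h
  · exact t.val_lt δ h
  · rw [t.val_eq_zero δ h]
    exact zero_le.trans_lt t.len_lt

theorem Init.refl (t : SeqNode κ) : t.Init t := ⟨le_rfl, fun _ _ => rfl⟩

theorem Init.trans {s t u : SeqNode κ} (hst : s.Init t) (htu : t.Init u) : s.Init u :=
  ⟨hst.1.trans htu.1, fun β hβ => (hst.2 β hβ).trans (htu.2 β (hβ.trans_le hst.1))⟩

theorem Init.eq_of_len_le {s t : SeqNode κ} (h : s.Init t) (hlen : t.len ≤ s.len) : s = t := by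
  have hlen' : s.len = t.len := h.1.antisymm hlen
  refine ext hlen' (funext fun β => ?_)
  rcases lt_or_ge β s.len with hβ | hβ
  · exact h.2 β hβ
  · rw [s.val_eq_zero β hβ, t.val_eq_zero β (hlen' ▸ hβ)]

theorem Init.total_of_init {s t u : SeqNode κ} (hs : s.Init u) (ht : t.Init u) :
    s.Init t ∨ t.Init s := by
  rcases le_total s.len t.len with h | h
  · exact Or.inl ⟨h, fun β hβ => (hs.2 β hβ).trans (ht.2 β (hβ.trans_le h)).symm⟩
  · exact Or.inr ⟨h, fun β hβ => (ht.2 β hβ).trans (hs.2 β (hβ.trans_le h)).symm⟩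

theorem restrict_init (t : SeqNode κ) (β : Ordinal.{0}) : (t.restrict β).Init t :=
  ⟨min_le_right _ _, fun _ hγ => if_pos hγ⟩

theorem restrict_len_of_le {t : SeqNode κ} {β : Ordinal.{0}} (h : β ≤ t.len) :
    (t.restrict β).len = β :=
  min_eq_left h

/-- `t` is a node of `^{<η}η`. -/
def IsBounded (η : Ordinal.{0}) (t : SeqNode κ) : Prop :=
  t.len < η ∧ ∀ δ, t.val δ < η

/-- The inclusion of `^{<μ}μ` into `^{<κ}κ`. -/
def up (h : μ.ord ≤ κ.ord) (t : SeqNode μ) : SeqNode κ where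
  len := t.len
  len_lt := t.len_lt.trans_le h
  val := t.val
  val_lt := fun β hβ => (t.val_lt β hβ).trans_le h
  val_eq_zero := t.val_eq_zero

variable (h : μ.ord ≤ κ.ord)

theorem up_injective : Function.Injective (up h) := fun s t hst => by
  have hlen : (up h s).len = (up h t).len := congrArg len hst
  have hval : (up h s).val = (up h t).val := congrArg val hst
  exact ext hlen hval

theorem isBounded_up (t : SeqNode μ) : (up h t).IsBounded μ.ord :=
  ⟨t.len_lt, t.val_lt_ord⟩

theorem Init.exists_up_eq {s : SeqNode κ} {t : SeqNode μ} (hst : s.Init (up h t)) :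
    ∃ s' : SeqNode μ, up h s' = s ∧ s'.Init t := by
  refine ⟨⟨s.len, hst.1.trans_lt t.len_lt, s.val, fun β hβ => ?_, s.val_eq_zero⟩, rfl, hst⟩
  rw [hst.2 β hβ]
  exact t.val_lt β (hβ.trans_le hst.1)

end SeqNode

open SeqNode

section Trees

variable {κ : Cardinal.{0}} {T b : Set (SeqNode κ)}

theorem IsBranch.injOn_len (hb : IsBranch T b) : Set.InjOn SeqNode.len b := by
  intro s hs t ht hst
  rcases hb.2 s hs t ht with h | h
  · exact h.eq_of_len_le hst.ge
  · exact (h.eq_of_len_le hst.le).symm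

theorem exists_isMaximalBranch_superset (hb : IsBranch T b) :
    ∃ m, b ⊆ m ∧ IsMaximalBranch T m := by
  obtain ⟨m, hbm, hmax⟩ := zorn_subset_nonempty {x | IsBranch T x ∧ b ⊆ x}
    (fun c hcS hchain _ => by
      refine ⟨⋃₀ c ∪ b, ⟨⟨?_, ?_⟩, subset_union_right⟩,
        fun s hs => (subset_sUnion_of_mem hs).trans subset_union_left⟩
      · rintro s (⟨x, hx, hs⟩ | hs)
        · exact (hcS hx).1.1 hs
        · exact hb.1 hs
      · have hc : ∀ x ∈ c, b ⊆ x := fun x hx => (hcS hx).2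
        rintro s (⟨x, hx, hs⟩ | hs) t (⟨y, hy, ht⟩ | ht)
        · rcases hchain.total hx hy with hxy | hyx
          · exact (hcS hy).1.2 s (hxy hs) t ht
          · exact (hcS hx).1.2 s hs t (hyx ht)
        · exact (hcS hx).1.2 s hs t (hc x hx ht)
        · exact (hcS hy).1.2 s (hc y hy hs) t ht
        · exact hb.2 s hs t ht)
    b ⟨hb, subset_rfl⟩
  exact ⟨m, hmax.1.2, hmax.1.1, fun b' hb' hmb' =>
    (hmax.2 ⟨hb', hmax.1.2.trans hmb'⟩ hmb').antisymm hmb'⟩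

theorem IsMaximalBranch.mem_of_forall_comparable (hb : IsMaximalBranch T b) {u : SeqNode κ}
    (hu : u ∈ T) (h : ∀ t ∈ b, t.Init u ∨ u.Init t) : u ∈ b := by
  have hbranch : IsBranch T (insert u b) := by
    refine ⟨insert_subset hu hb.1.1, ?_⟩
    rintro s (rfl | hs) t (rfl | ht)
    · exact Or.inl (Init.refl _)
    · exact (h t ht).symm
    · exact h s hs
    · exact hb.1.2 s hs t ht
  exact hb.2 _ hbranch (subset_insert u b) ▸ mem_insert u b

theorem IsMaximalBranch.restrict_mem (hT : IsSeqTree T) (hb : IsMaximalBranch T b)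
    {t : SeqNode κ} (ht : t ∈ b) (γ : Ordinal.{0}) : t.restrict γ ∈ b := by
  refine hb.mem_of_forall_comparable (hT t (hb.1.1 ht) _ (restrict_init t γ)) fun s hs => ?_
  rcases hb.1.2 s hs t ht with h | h
  · exact Init.total_of_init h (restrict_init t γ)
  · exact Or.inr ((restrict_init t γ).trans h)

theorem IsRegularTreeIn.exists_extension_of_branch {η : Ordinal.{0}}
    (hT : IsRegularTreeIn κ η T) (hb : IsBranch T b) {γ : Ordinal.{0}} (hγ : γ < η)
    (hlen : ∀ t ∈ b, t.len ≤ γ) : ∃ u ∈ T, u.len = γ ∧ ∀ t ∈ b, t.Init u := by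
  obtain ⟨m, hbm, hm⟩ := exists_isMaximalBranch_superset hb
  obtain ⟨u, hum, hu⟩ := hT.2.2.2.2.1 m hm γ hγ
  refine ⟨u, hm.1.1 hum, hu, fun t ht => ?_⟩
  rcases hm.1.2 t (hbm ht) u hum with h | h
  · exact h
  · rw [h.eq_of_len_le (hu ▸ hlen t ht)]
    exact Init.refl t

end Trees

section Filters

variable {α : Type (u + 1)} {κ : Cardinal.{u}}

theorem Filter.eventually_forall_lt_iff {l : Filter α} [CardinalInterFilter l (lift.{u + 1} κ)]
    {θ : Ordinal.{u}} (hθ : θ < κ.ord) {p : α → Ordinal.{u} → Prop} :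
    (∀ᶠ x in l, ∀ γ < θ, p x γ) ↔ ∀ γ < θ, ∀ᶠ x in l, p x γ :=
  eventually_cardinal_ball (S := Iio θ) (by rwa [mk_Iio_ordinal, lift_lt, ← lt_ord])

variable {U : Ultrafilter α} [CardinalInterFilter (U : Filter α) (lift.{u + 1} κ)]

theorem Ultrafilter.exists_eventually_eq_of_lt {θ : Ordinal.{u}} (hθ : θ < κ.ord)
    {f : α → Ordinal.{u}} (hf : ∀ᶠ x in U, f x < θ) : ∃ γ < θ, ∀ᶠ x in U, f x = γ := by
  by_contra! hne
  have hall : ∀ᶠ x in U, ∀ γ < θ, f x ≠ γ :=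
    (eventually_forall_lt_iff hθ).2 hne
  obtain ⟨x, hx, hfx⟩ := (hall.and hf).exists
  exact hx _ hfx rfl

theorem Ultrafilter.exists_eventually_eq_set {ι : Type (u + 1)} (hι : #ι < lift.{u + 1} κ)
    (G : α → Set ι) : ∃ s, ∀ᶠ x in U, G x = s := by
  refine ⟨{i | ∀ᶠ x in U, i ∈ G x}, ?_⟩
  have hdecided : ∀ i, ∀ᶠ x in U, (i ∈ G x ↔ ∀ᶠ y in U, i ∈ G y) := fun i => by
    by_cases h : ∀ᶠ y in U, i ∈ G y
    · exact h.mono fun x hx => iff_of_true hx h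
    · exact (Ultrafilter.eventually_not.2 h).mono fun x hx => iff_of_false hx h
  exact ((eventually_cardinal_forall hι).2 hdecided).mono fun x hx => Set.ext hx

theorem Ultrafilter.exists_limit_of_lt {ι : Type*} {s : Set ι} {θ : Ordinal.{u}}
    (hθ : θ < κ.ord) {f : α → ι → Ordinal.{u}} (hf : ∀ i ∈ s, ∀ᶠ x in U, f x i < θ) :
    ∃ g : ι → Ordinal.{u}, ∀ i ∈ s, g i < θ ∧ ∀ᶠ x in U, f x i = g i := by
  have hlim : ∀ i, ∃ γ, i ∈ s → γ < θ ∧ ∀ᶠ x in U, f x i = γ := fun i => by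
    by_cases hi : i ∈ s
    · obtain ⟨γ, hγ, hfγ⟩ := U.exists_eventually_eq_of_lt hθ (hf i hi)
      exact ⟨γ, fun _ => ⟨hγ, hfγ⟩⟩
    · exact ⟨0, fun h => absurd h hi⟩
  choose g hg using hlim
  exact ⟨g, hg⟩

theorem Filter.wellFounded_eventually_lt {β : Type*} {l : Filter β} [l.NeBot]
    [CountableInterFilter l] {γ : Type*} [Preorder γ] [WellFoundedLT γ] :
    WellFounded (fun f g : β → γ => ∀ᶠ x in l, f x < g x) := by
  refine wellFounded_iff_isEmpty_descending_chain.2 ⟨fun ⟨f, hf⟩ => ?_⟩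
  obtain ⟨x, hx⟩ := (eventually_countable_forall.2 hf).exists
  exact (wellFounded_iff_isEmpty_descending_chain.1 wellFounded_lt).false ⟨(f · x), hx⟩

end Filters

theorem Cardinal.prod_lt_lift_of_lt {ι : Type u} [Finite ι] {f : ι → Cardinal.{v}}
    {c : Cardinal.{v}} (hc : ℵ₀ < c) (hf : ∀ i, f i < c) : prod f < lift.{u} c := by
  cases nonempty_fintype ι
  set m : Cardinal.{v} := max ℵ₀ (Finset.univ.sup f)
  have hm : m < c := max_lt hc ((Finset.sup_lt_iff (hc.trans_le' bot_le)).2 fun i _ => hf i)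
  calc prod f ≤ prod fun _ : ι => m :=
        prod_le_prod _ _ fun i => le_max_of_le_right (Finset.le_sup (Finset.mem_univ i))
    _ = lift.{u} m ^ (Fintype.card ι) := by
        rw [prod_const, mk_fintype, lift_natCast, power_natCast]
    _ ≤ lift.{u} m := power_nat_le (aleph0_le_lift.2 (le_max_left _ _))
    _ < lift.{u} c := lift_lt.2 hm

/-- A normal measure on `κ`, as an ultrafilter on all ordinals that concentrates on `κ`. -/
structure IsNormalMeasure (κ : Cardinal.{0}) (U : Ultrafilter Ordinal.{0}) : Prop where
  eventually_lt_ord : ∀ᶠ β in U, β < κ.ord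
  cardinalInterFilter : CardinalInterFilter (U : Filter Ordinal.{0}) (lift.{1} κ)
  eventually_gt : ∀ γ < κ.ord, ∀ᶠ β in U, γ < β
  eventually_diag : ∀ P : Ordinal.{0} → Ordinal.{0} → Prop,
    (∀ α < κ.ord, ∀ᶠ β in U, P α β) → ∀ᶠ β in U, ∀ α < β, P α β

theorem isClubIn_cardinals {κ : Cardinal.{0}} (hκ : ∀ μ < κ, Order.succ μ < κ) :
    IsClubIn {β | β < κ.ord ∧ β.card.ord = β} κ.ord := by
  refine ⟨fun β hβ => hβ.1, fun β hβ => ?_, fun s hs hne hsup => ⟨hsup, ?_⟩⟩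
  · refine ⟨(Order.succ β.card).ord, ⟨ord_lt_ord.2 (hκ _ (lt_ord.1 hβ)), by rw [card_ord]⟩, ?_⟩
    exact (lt_ord.2 (Order.lt_succ β.card)).le
  · have hbdd : BddAbove s := ⟨κ.ord, fun y hy => (hs hy).1.le⟩
    refine (ord_card_le _).antisymm (csSup_le hne fun x hx => ?_)
    rw [← (hs hx).2]
    exact ord_le_ord.2 (Ordinal.card_le_card (le_csSup hbdd hx))

namespace IsNormalMeasure

variable {κ : Cardinal.{0}} {U : Ultrafilter Ordinal.{0}}

theorem exists_eventually_eq_of_lt_self (hU : IsNormalMeasure κ U) {f : Ordinal.{0} → Ordinal.{0}}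
    (hf : ∀ᶠ β in U, f β < β) : ∃ γ, ∀ᶠ β in U, f β = γ := by
  by_contra! hne
  obtain ⟨β, hβ, hfβ⟩ := ((hU.eventually_diag _ fun γ _ => hne γ).and hf).exists
  exact hβ _ hfβ rfl

theorem exists_eventually_of_eventually_exists_bounded (hU : IsNormalMeasure κ U)
    {P : Ordinal.{0} → SeqNode κ → Prop}
    (h : ∀ᶠ β in U, ∃ x : SeqNode κ, x.IsBounded β ∧ P β x) : ∃ q, ∀ᶠ β in U, P β q := by
  have := hU.cardinalInterFilter
  -- press down the length and each value of the chosen nodes, then combine the fewer than `κ`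
  -- values below the common length by completeness
  obtain ⟨p, hp⟩ := h.choice
  obtain ⟨γ, hγ⟩ := hU.exists_eventually_eq_of_lt_self (hp.mono fun β hβ => hβ.1.1)
  choose v hv using fun δ =>
    hU.exists_eventually_eq_of_lt_self (f := fun β => (p β).val δ) (hp.mono fun β hβ => hβ.1.2 δ)
  obtain ⟨β₀, hβ₀⟩ := hγ.exists
  have hvals : ∀ᶠ β in U, ∀ δ < γ, (p β).val δ = v δ :=
    (eventually_forall_lt_iff (hβ₀ ▸ (p β₀).len_lt)).2 fun δ _ => hv δ
  obtain ⟨β₁, hlen₁, hval₁⟩ := (hγ.and hvals).exists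
  refine ⟨p β₁, ((hγ.and hvals).and hp).mono fun β ⟨⟨hlen, hval⟩, _, hP⟩ => ?_⟩
  have hinit : (p β₁).Init (p β) :=
    ⟨(hlen₁.trans hlen.symm).le,
      fun δ hδ => (hval₁ δ (hlen₁ ▸ hδ)).trans (hval δ (hlen₁ ▸ hδ)).symm⟩
  rwa [hinit.eq_of_len_le (hlen.trans hlen₁.symm).le]

theorem eventually_mem_of_isClubIn (hU : IsNormalMeasure κ U) (hκ : ℵ₀ ≤ κ)
    {C : Set Ordinal.{0}} (hC : IsClubIn C κ.ord) : ∀ᶠ β in U, β ∈ C := by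
  by_contra hnot
  have hlim := isSuccLimit_ord hκ
  obtain ⟨γ₀, hγ₀C, -⟩ := hC.2.1 0 hlim.bot_lt
  -- below a `β ∉ C`, the supremum of `C` is a smaller element of `C`
  have hf : ∀ᶠ β in U, sSup (C ∩ Iio β) ∈ C ∧ sSup (C ∩ Iio β) < β := by
    refine ((Ultrafilter.eventually_not.2 hnot).and (hU.eventually_lt_ord.and
      (hU.eventually_gt γ₀ (hC.1 hγ₀C)))).mono fun β ⟨hβC, hβκ, hγ₀β⟩ => ?_
    have hne : (C ∩ Iio β).Nonempty := ⟨γ₀, hγ₀C, hγ₀β⟩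
    have hle : sSup (C ∩ Iio β) ≤ β := csSup_le hne fun x hx => hx.2.le
    have hmem := hC.2.2 _ inter_subset_left hne (hle.trans_lt hβκ)
    exact ⟨hmem, hle.lt_of_ne fun h => hβC (h ▸ hmem)⟩
  obtain ⟨γ, hγ⟩ := hU.exists_eventually_eq_of_lt_self (hf.mono fun β h => h.2)
  obtain ⟨β₀, hβ₀, hfβ₀⟩ := (hγ.and hf).exists
  have hγC : γ ∈ C := hβ₀ ▸ hfβ₀.1
  obtain ⟨γ', hγ'C, hγγ'⟩ := hC.2.1 (Order.succ γ) (hlim.succ_lt (hC.1 hγC))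
  obtain ⟨β, hβγ, hγ'β⟩ := (hγ.and (hU.eventually_gt γ' (hC.1 hγ'C))).exists
  have hγ'le : γ' ≤ sSup (C ∩ Iio β) := le_csSup ⟨β, fun x hx => hx.2.le⟩ ⟨hγ'C, hγ'β⟩
  exact (Order.lt_succ γ).not_ge (hγγ'.trans (hγ'le.trans hβγ.le))

theorem two_power_lt (hU : IsNormalMeasure κ U) {μ : Cardinal.{0}} (hμ : μ < κ) : 2 ^ μ < κ := by
  have := hU.cardinalInterFilter
  by_contra! hle
  obtain ⟨g⟩ : #(Iio κ.ord) ≤ #(Set (Iio μ.ord)) := by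
    rwa [mk_Iio_ordinal, mk_set, mk_Iio_ordinal, card_ord, card_ord, ← lift_two.{1, 0},
      ← lift_power, Cardinal.lift_le]
  let G : Ordinal.{0} → Set (Iio μ.ord) := fun β => if h : β < κ.ord then g ⟨β, h⟩ else ∅
  obtain ⟨s, hs⟩ := U.exists_eventually_eq_set (by rwa [mk_Iio_ordinal, card_ord, lift_lt]) G
  obtain ⟨β₀, hβ₀, hβ₀κ⟩ := (hs.and hU.eventually_lt_ord).exists
  obtain ⟨β, hβ, hβκ, hβ₀β⟩ :=
    (hs.and (hU.eventually_lt_ord.and (hU.eventually_gt β₀ hβ₀κ))).exists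
  have hg : g ⟨β, hβκ⟩ = g ⟨β₀, hβ₀κ⟩ := by simpa [G, hβκ, hβ₀κ] using hβ.trans hβ₀.symm
  exact hβ₀β.ne' (congrArg Subtype.val (g.injective hg))

theorem eventually_card_ord_eq (hU : IsNormalMeasure κ U) (hκ : ℵ₀ ≤ κ) :
    ∀ᶠ β : Ordinal.{0} in U, β.card.ord = β :=
  (hU.eventually_mem_of_isClubIn hκ (isClubIn_cardinals fun _ hμ =>
    (Order.succ_le_of_lt (cantor _)).trans_lt (hU.two_power_lt hμ))).mono fun _ h => h.2

end IsNormalMeasure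

namespace IsUltrafilterOn

variable {U : Set (Set Ordinal.{0})} {η : Ordinal.{0}}

def toUltrafilter (hU : IsUltrafilterOn U η) : Ultrafilter Ordinal.{0} :=
  Ultrafilter.ofComplNotMemIff
    { sets := {s | s ∩ Iio η ∈ U}
      univ_sets := by simpa using hU.2.1
      sets_of_superset := fun hs hst =>
        hU.2.2.2.1 _ hs _ (inter_subset_inter_left _ hst) inter_subset_right
      inter_sets := fun {s t} hs ht => by
        change (s ∩ t) ∩ Iio η ∈ U
        rw [inter_inter_distrib_right]
        exact hU.2.2.2.2.1 _ hs _ ht }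
    fun s => by
      change sᶜ ∩ Iio η ∉ U ↔ s ∩ Iio η ∈ U
      have hcompl : Iio η \ (s ∩ Iio η) = sᶜ ∩ Iio η := by ext; simp [and_comm]
      constructor
      · intro h
        exact (hU.2.2.2.2.2 _ inter_subset_right).resolve_right (hcompl ▸ h)
      · intro h h'
        have hempty : (s ∩ Iio η) ∩ (sᶜ ∩ Iio η) = ∅ := by ext; simp; tauto
        exact hU.2.2.1 (hempty ▸ hU.2.2.2.2.1 _ h _ h')

variable (hU : IsUltrafilterOn U η)

theorem mem_toUltrafilter {s : Set Ordinal.{0}} : s ∈ hU.toUltrafilter ↔ s ∩ Iio η ∈ U :=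
  Iff.rfl

theorem Iio_mem_toUltrafilter : Iio η ∈ hU.toUltrafilter := by
  simpa [mem_toUltrafilter] using hU.2.1

theorem cardinalInterFilter_toUltrafilter {κ : Cardinal.{0}} (hc : IsKappaComplete U κ) :
    CardinalInterFilter (hU.toUltrafilter : Filter Ordinal.{0}) (lift.{1} κ) where
  cardinal_sInter_mem S hS hmem := by
    rcases S.eq_empty_or_nonempty with rfl | hne
    · simp
    have htrace : ⋂₀ S ∩ Iio η = ⋂₀ ((· ∩ Iio η) '' S) := by
      rw [sInter_image, sInter_eq_biInter, biInter_inter hne]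
    rw [Ultrafilter.mem_coe, mem_toUltrafilter, htrace]
    exact hc _ (by rintro _ ⟨s, hs, rfl⟩; exact hmem s hs) (hne.image _)
      (mk_image_le.trans_lt hS)

theorem not_eventually_eq_toUltrafilter (hn : IsNonprincipal U) (γ : Ordinal.{0}) :
    ¬∀ᶠ β in (hU.toUltrafilter : Filter Ordinal.{0}), β = γ := by
  intro h
  rw [Filter.Eventually, Ultrafilter.mem_coe, mem_toUltrafilter] at h
  have hγ : γ < η := by
    by_contra hγ
    have hempty : {β | β = γ} ∩ Iio η = ∅ :=
      eq_empty_of_forall_notMem fun β ⟨hβ, hβη⟩ => hγ (hβ ▸ hβη)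
    exact hU.2.2.1 (hempty ▸ h)
  exact hn γ (by simpa [hγ] using h)

end IsUltrafilterOn

section NormalMeasure

variable {κ : Cardinal.{0}} {V : Ultrafilter Ordinal.{0}}

def NonconstantBelow (V : Ultrafilter Ordinal.{0}) (κ : Cardinal.{0}) :
    Set (Ordinal.{0} → Ordinal.{0}) :=
  {f | (∀ᶠ x in V, f x < κ.ord) ∧ ∀ γ, ¬∀ᶠ x in V, f x = γ}

theorem isNormalMeasure_map_of_minimal [CardinalInterFilter (V : Filter Ordinal.{0}) (lift.{1} κ)]
    (hκ : ℵ₀ ≤ κ) {f : Ordinal.{0} → Ordinal.{0}} (hf : f ∈ NonconstantBelow V κ)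
    (hmin : ∀ g ∈ NonconstantBelow V κ, ¬∀ᶠ x in V, g x < f x) :
    IsNormalMeasure κ (V.map f) := by
  refine ⟨hf.1, ⟨fun S hS hmem => ?_⟩, fun γ hγ => ?_, fun P hP => ?_⟩
  · rw [Ultrafilter.coe_map, mem_map, preimage_sInter]
    exact (cardinal_bInter_mem hS).2 hmem
  · by_contra hle
    have hlt : ∀ᶠ x in V, f x < Order.succ γ :=
      (Ultrafilter.eventually_not.2 hle).mono fun x hx => Order.lt_succ_of_le (not_lt.1 hx)
    obtain ⟨γ', -, hγ'⟩ :=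
      V.exists_eventually_eq_of_lt ((isSuccLimit_ord hκ).succ_lt hγ) hlt
    exact hf.2 γ' hγ'
  · -- pick, for almost every `x`, a witness `g x < f x` of the failure of `P · (f x)`;
    -- `g` is then constant modulo `V` by minimality of `f`
    by_contra hfail
    have hfail' := Ultrafilter.eventually_not.2 hfail
    rw [Ultrafilter.coe_map, eventually_map] at hfail'
    obtain ⟨g, hg⟩ : ∃ g : Ordinal.{0} → Ordinal.{0}, ∀ᶠ x in V, g x < f x ∧ ¬P (g x) (f x) := by
      refine Eventually.choice (r := fun x y => y < f x ∧ ¬P y (f x))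
        (hfail'.mono fun x hx => ?_)
      push Not at hx
      exact hx
    have hgκ : ∀ᶠ x in V, g x < κ.ord := (hg.and hf.1).mono fun x hx => hx.1.1.trans hx.2
    obtain ⟨γ, hγ⟩ : ∃ γ, ∀ᶠ x in V, g x = γ := by
      by_contra! hne
      exact hmin g ⟨hgκ, fun γ => Ultrafilter.eventually_not.1 (hne γ)⟩ (hg.mono fun x hx => hx.1)
    obtain ⟨x₀, hx₀, hx₀κ⟩ := (hγ.and hgκ).exists
    have hPγ := hP γ (hx₀ ▸ hx₀κ)
    rw [Ultrafilter.coe_map, eventually_map] at hPγ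
    obtain ⟨x, ⟨hgx, hgfx⟩, hPx⟩ := ((hγ.and hg).and hPγ).exists
    exact hgfx.2 (hgx ▸ hPx)

theorem IsMeasurableCard.exists_isNormalMeasure (hκ : IsMeasurableCard κ) :
    ∃ U, IsNormalMeasure κ U := by
  obtain ⟨hκ, W, hW, hc, hn⟩ := hκ
  let V := hW.toUltrafilter
  have := hW.cardinalInterFilter_toUltrafilter hc
  have : CountableInterFilter (V : Filter Ordinal.{0}) :=
    CardinalInterFilter.toCountableInterFilter _ (aleph0_lt_lift.2 hκ)
  have hid : id ∈ NonconstantBelow V κ :=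
    ⟨hW.Iio_mem_toUltrafilter, hW.not_eventually_eq_toUltrafilter hn⟩
  have hwf := wellFounded_eventually_lt (l := (V : Filter Ordinal.{0})) (γ := Ordinal.{0})
  exact ⟨_, isNormalMeasure_map_of_minimal hκ.le (hwf.min_mem _ ⟨id, hid⟩)
    fun g hg => hwf.not_lt_min _ hg⟩

end NormalMeasure

section UltraLimit

variable {κ : Cardinal.{0}} {U : Ultrafilter Ordinal.{0}} {S : Ordinal.{0} → Set (SeqNode κ)}

def IsBoundedRegularTree (κ : Cardinal.{0}) (η : Ordinal.{0}) (T : Set (SeqNode κ)) : Prop :=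
  IsRegularTreeIn κ η T ∧ ∀ t ∈ T, t.IsBounded η

def ultraLimit (U : Ultrafilter Ordinal.{0}) (S : Ordinal.{0} → Set (SeqNode κ)) :
    Set (SeqNode κ) :=
  {t | ∀ᶠ β in U, t ∈ S β}

theorem IsNormalMeasure.eventually_subset_of_subset_ultraLimit (hU : IsNormalMeasure κ U)
    {X : Set (SeqNode κ)} (hX : X ⊆ ultraLimit U S) (hXc : #X < lift.{1} κ) :
    ∀ᶠ β in U, X ⊆ S β := by
  have := hU.cardinalInterFilter
  exact (eventually_cardinal_ball hXc).2 hX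

theorem isSeqTree_ultraLimit (hS : ∀ᶠ β in U, IsBoundedRegularTree κ β (S β)) :
    IsSeqTree (ultraLimit U S) := fun t ht s hst =>
  (ht.and hS).mono fun _ ⟨htβ, hreg, _⟩ => hreg.1 t htβ s hst

theorem IsNormalMeasure.exists_mem_ultraLimit_extension_of_branch (hU : IsNormalMeasure κ U)
    (hS : ∀ᶠ β in U, IsBoundedRegularTree κ β (S β)) {b : Set (SeqNode κ)}
    (hb : IsBranch (ultraLimit U S) b) (hbc : #b < lift.{1} κ) {γ : Ordinal.{0}}
    (hγ : γ < κ.ord) (hlen : ∀ t ∈ b, t.len ≤ γ) :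
    ∃ u ∈ ultraLimit U S, u.len = γ ∧ ∀ t ∈ b, t.Init u := by
  have hext : ∀ᶠ β in U, ∃ u : SeqNode κ, u.IsBounded β ∧
      (u ∈ S β ∧ u.len = γ ∧ ∀ t ∈ b, t.Init u) := by
    refine (((hU.eventually_subset_of_subset_ultraLimit hb.1 hbc).and
      (hU.eventually_gt γ hγ)).and hS).mono fun β ⟨⟨hbβ, hγβ⟩, hreg, hbd⟩ => ?_
    obtain ⟨u, hu, hulen, hbu⟩ := hreg.exists_extension_of_branch ⟨hbβ, hb.2⟩ hγβ hlen
    exact ⟨u, hbd u hu, hu, hulen, hbu⟩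
  obtain ⟨u, hu⟩ := hU.exists_eventually_of_eventually_exists_bounded hext
  obtain ⟨β, -, hulen, hbu⟩ := hu.exists
  exact ⟨u, hu.mono fun _ h => h.1, hulen, hbu⟩

theorem IsNormalMeasure.mk_seqLevel_ultraLimit_lt (hU : IsNormalMeasure κ U)
    (hS : ∀ᶠ β in U, IsBoundedRegularTree κ β (S β)) {γ : Ordinal.{0}} (hγ : γ < κ.ord) :
    #(SeqLevel (ultraLimit U S) γ) < lift.{1} κ := by
  by_contra! hle
  obtain ⟨g⟩ : #(Iio κ.ord) ≤ #(SeqLevel (ultraLimit U S) γ) := by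
    rwa [mk_Iio_ordinal, card_ord]
  -- by normality, `g` maps the ordinals below almost every `β` into `S β`
  have hdiag : ∀ᶠ β in U, ∀ ξ < β, ∀ hξ : ξ < κ.ord, (g ⟨ξ, hξ⟩ : SeqNode κ) ∈ S β :=
    hU.eventually_diag _ fun ξ hξ => (g ⟨ξ, hξ⟩).2.1.mono fun _ h _ => h
  obtain ⟨β, hgβ, hβκ, hγβ, hreg, -⟩ :=
    (hdiag.and (hU.eventually_lt_ord.and ((hU.eventually_gt γ hγ).and hS))).exists
  have hinj : Function.Injective fun ξ : Iio β =>
      (⟨g ⟨ξ, ξ.2.trans hβκ⟩, hgβ ξ ξ.2 _, (g _).2.2⟩ : SeqLevel (S β) γ) := by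
    intro ξ ξ' h
    exact Subtype.ext (Subtype.mk.inj (g.injective (Subtype.ext (Subtype.mk.inj h))))
  have hge := mk_le_of_injective hinj
  rw [mk_Iio_ordinal] at hge
  exact (hreg.2.2.2.1 γ hγβ).not_ge hge

theorem IsNormalMeasure.exists_mem_isMaximalBranch_ultraLimit (hU : IsNormalMeasure κ U)
    (hS : ∀ᶠ β in U, IsBoundedRegularTree κ β (S β)) {b : Set (SeqNode κ)}
    (hb : IsMaximalBranch (ultraLimit U S) b) {γ : Ordinal.{0}} (hγ : γ < κ.ord) :
    ∃ t ∈ b, t.len = γ := by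
  by_cases hlong : ∃ t ∈ b, γ ≤ t.len
  · obtain ⟨t, htb, hγt⟩ := hlong
    exact ⟨_, hb.restrict_mem (isSeqTree_ultraLimit hS) htb γ, restrict_len_of_le hγt⟩
  push Not at hlong
  -- `b` is short, hence small, and has an upper bound on level `γ`, which must lie in `b`
  have hbc : #b < lift.{1} κ := by
    rw [← mk_image_eq_of_injOn _ _ hb.1.injOn_len]
    refine (mk_le_mk_of_subset (t := Iio γ) ?_).trans_lt ?_
    · rintro _ ⟨t, ht, rfl⟩
      exact hlong t ht
    · rwa [mk_Iio_ordinal, Cardinal.lift_lt, ← lt_ord]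
  obtain ⟨u, hu, hulen, hbu⟩ :=
    hU.exists_mem_ultraLimit_extension_of_branch hS hb.1 hbc hγ fun t ht => (hlong t ht).le
  exact ⟨u, hb.mem_of_forall_comparable hu fun t ht => Or.inl (hbu t ht), hulen⟩

theorem IsNormalMeasure.isPerfect_ultraLimit (hU : IsNormalMeasure κ U)
    (hS : ∀ᶠ β in U, IsBoundedRegularTree κ β (S β)) : IsPerfect (ultraLimit U S) := by
  intro t ht
  have hsplit := (ht.and hS).mono fun β ⟨htβ, hreg, _⟩ => hreg.2.2.2.2.2 t htβ
  obtain ⟨s, hs⟩ := hU.exists_eventually_of_eventually_exists_bounded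
    (P := fun β s => s ∈ S β ∧ t.Init s ∧ ∃ u ∈ S β, t.Init u ∧ ¬s.Init u ∧ ¬u.Init s)
    ((hsplit.and hS).mono fun β ⟨⟨s, hs, u, hu, hts, htu, hsu, hus⟩, _, hbd⟩ =>
      ⟨s, hbd s hs, hs, hts, u, hu, htu, hsu, hus⟩)
  obtain ⟨u, hu⟩ := hU.exists_eventually_of_eventually_exists_bounded
    (P := fun β u => u ∈ S β ∧ t.Init u ∧ ¬s.Init u ∧ ¬u.Init s)
    ((hs.and hS).mono fun β ⟨⟨_, _, u, hu, h⟩, _, hbd⟩ => ⟨u, hbd u hu, hu, h⟩)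
  obtain ⟨β, ⟨-, hts, -⟩, -, htu, hsu, hus⟩ := (hs.and hu).exists
  exact ⟨s, hs.mono fun _ h => h.1, u, hu.mono fun _ h => h.1, hts, htu, hsu, hus⟩

theorem IsNormalMeasure.isRegularTree_ultraLimit (hU : IsNormalMeasure κ U)
    (hS : ∀ᶠ β in U, IsBoundedRegularTree κ β (S β)) : IsRegularTree κ (ultraLimit U S) := by
  refine ⟨isSeqTree_ultraLimit hS, fun t _ => t.len_lt, fun γ hγ => ?_,
    fun γ hγ => ?_, fun b hb γ hγ => hU.exists_mem_isMaximalBranch_ultraLimit hS hb hγ,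
    hU.isPerfect_ultraLimit hS⟩
  · have hκ : (0 : Cardinal.{1}) < lift.{1} κ := by
      simpa [pos_iff_ne_zero] using ord_pos.1 (zero_le.trans_lt hγ)
    obtain ⟨u, hu, hulen, -⟩ := hU.exists_mem_ultraLimit_extension_of_branch hS
      (b := ∅) ⟨empty_subset _, by simp⟩ (by simpa using hκ) hγ (by simp)
    exact ⟨u, hu, hulen⟩
  · rw [card_ord]
    exact hU.mk_seqLevel_ultraLimit_lt hS hγ

end UltraLimit

section Transfer

variable {κ μ : Cardinal.{0}} (h : μ.ord ≤ κ.ord)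

theorem IsMaximalBranch.preimage_up {T : Set (SeqNode μ)} {b : Set (SeqNode κ)}
    (hb : IsMaximalBranch (up h '' T) b) : IsMaximalBranch T (up h ⁻¹' b) := by
  have hbT : ∀ t, up h t ∈ b → t ∈ T := fun t ht => by
    obtain ⟨t', ht', heq⟩ := hb.1.1 ht
    exact up_injective h heq ▸ ht'
  refine ⟨⟨hbT, fun s hs t ht => hb.1.2 _ hs _ ht⟩, fun b' hb' hbb' => ?_⟩
  have himage : up h '' b' = b := by
    refine hb.2 _ ⟨image_mono hb'.1, ?_⟩ fun x hx => ?_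
    · rintro _ ⟨s, hs, rfl⟩ _ ⟨t, ht, rfl⟩
      exact hb'.2 s hs t ht
    · obtain ⟨t, -, rfl⟩ := hb.1.1 hx
      exact ⟨t, hbb' hx, rfl⟩
  rw [← himage, preimage_image_eq _ (up_injective h)]

theorem IsRegularTreeIn.image_up {η : Ordinal.{0}} {T : Set (SeqNode μ)}
    (hT : IsRegularTreeIn μ η T) : IsRegularTreeIn κ η (up h '' T) := by
  obtain ⟨htree, hlen, hne, hsize, hbranch, hperf⟩ := hT
  have hlevel : ∀ α, SeqLevel (up h '' T) α = up h '' SeqLevel T α := fun α => by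
    ext x
    constructor
    · rintro ⟨⟨t, ht, rfl⟩, hα⟩
      exact ⟨t, ⟨ht, hα⟩, rfl⟩
    · rintro ⟨t, ⟨ht, hα⟩, rfl⟩
      exact ⟨⟨t, ht, rfl⟩, hα⟩
  refine ⟨?_, ?_, fun α hα => ?_, fun α hα => ?_, fun b hb α hα => ?_, ?_⟩
  · rintro _ ⟨t, ht, rfl⟩ s hs
    obtain ⟨s', rfl, hs't⟩ := hs.exists_up_eq h
    exact ⟨s', htree t ht s' hs't, rfl⟩
  · rintro _ ⟨t, ht, rfl⟩
    exact hlen t ht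
  · rw [hlevel]
    exact (hne α hα).image _
  · rw [hlevel, mk_image_eq (up_injective h)]
    exact hsize α hα
  · obtain ⟨t, ht, htα⟩ := hbranch _ (hb.preimage_up h) α hα
    exact ⟨_, ht, htα⟩
  · rintro _ ⟨t, ht, rfl⟩
    obtain ⟨s, hs, u, hu, hts, htu, hsu, hus⟩ := hperf t ht
    exact ⟨_, ⟨s, hs, rfl⟩, _, ⟨u, hu, rfl⟩, hts, htu, hsu, hus⟩

theorem IsSDMatrixIn.preimage_up {η : Ordinal.{0}} {d : ℕ} {T : Fin d → Set (SeqNode μ)}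
    {X : Fin d → Set (SeqNode κ)} (hXT : ∀ i, X i ⊆ up h '' T i)
    (hX : IsSDMatrixIn η (fun i => up h '' T i) X) :
    IsSDMatrixIn η T (fun i => up h ⁻¹' X i) := by
  obtain ⟨α, β, hαβ, hβ, t, ht, hXt⟩ := hX
  choose s hs hst using fun i => (ht i).1
  refine ⟨α, β, hαβ, hβ, s, fun i => ⟨hs i, (congrArg len (hst i)).trans (ht i).2⟩,
    fun i => ⟨fun x hx => ?_, ?_⟩⟩
  · obtain ⟨x', hx', hxx'⟩ := hXT i hx
    exact ⟨up_injective h hxx' ▸ hx', ((hXt i).1 hx).2⟩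
  · rintro y ⟨⟨hy, hylen⟩, hsy⟩
    obtain ⟨x, hx, hyx⟩ := (hXt i).2 (up h y) ⟨⟨⟨y, hy, rfl⟩, hylen⟩, hst i ▸ hsy⟩
    obtain ⟨x', -, rfl⟩ := hXT i hx
    exact ⟨x', hx, hyx⟩

end Transfer

/-- `SDHL(d,σ,η)` for trees of height `η` inside `^{<η}η ⊆ ^{<κ}κ`, so that all heights
`η ≤ κ` are treated within the same type of nodes. -/
def SDHLAt (κ : Cardinal.{0}) (d : ℕ) (σ : Cardinal.{0}) (η : Ordinal.{0}) : Prop :=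
  ∀ T : Fin d → Set (SeqNode κ), (∀ i, IsBoundedRegularTree κ η (T i)) →
    ∀ c : (Fin d → SeqNode κ) → Ordinal.{0}, (∀ x ∈ LevelProd T, c x < σ.ord) →
      ∃ X : Fin d → Set (SeqNode κ), (∀ i, X i ⊆ T i) ∧ IsSDMatrixIn η T X ∧ MonoOn c X

theorem SDHL.sdhlAt {d : ℕ} {σ κ : Cardinal.{0}} (h : SDHL d σ κ) : SDHLAt κ d σ κ.ord :=
  fun T hT c hc => h T (fun i => (hT i).1) c hc

theorem SDHLAt.sdhl {d : ℕ} {σ κ μ : Cardinal.{0}} (h : μ.ord ≤ κ.ord)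
    (hμ : SDHLAt κ d σ μ.ord) : SDHL d σ μ := by
  intro T hT c hc
  have hup : Function.Injective fun (y : Fin d → SeqNode μ) i => up h (y i) :=
    (up_injective h).comp_left
  let c' := Function.extend (fun (y : Fin d → SeqNode μ) i => up h (y i)) c 0
  have hc' : ∀ y, c' (fun i => up h (y i)) = c y := fun y => hup.extend_apply c 0 y
  have hLP : ∀ {Y : Fin d → Set (SeqNode μ)} y, (fun i => up h (y i)) ∈ LevelProd
      (fun i => up h '' Y i) → y ∈ LevelProd Y := fun y ⟨α, hy⟩ =>
    ⟨α, fun i => ⟨(up_injective h).mem_set_image.1 (hy i).1, (hy i).2⟩⟩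
  obtain ⟨X, hXT, hXmat, hXmono⟩ := hμ (fun i => up h '' T i)
    (fun i => ⟨(hT i).image_up h, fun _ ⟨t, _, ht⟩ => ht ▸ isBounded_up h t⟩) c' (by
      rintro x ⟨α, hx⟩
      choose y hyT hyx using fun i => (hx i).1
      obtain rfl : (fun i => up h (y i)) = x := funext hyx
      rw [hc']
      exact hc y (hLP y ⟨α, hx⟩))
  refine ⟨fun i => up h ⁻¹' X i, fun i x hx => ?_, hXmat.preimage_up h hXT,
    fun x ⟨α, hx⟩ y ⟨α', hy⟩ => ?_⟩
  · obtain ⟨x', hx', hxx'⟩ := hXT i hx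
    exact up_injective h hxx' ▸ hx'
  · rw [← hc' x, ← hc' y]
    exact hXmono _ ⟨α, fun i => ⟨(hx i).1, (hx i).2⟩⟩ _ ⟨α', fun i => ⟨(hy i).1, (hy i).2⟩⟩

section Reflection

variable {κ : Cardinal.{0}} {U : Ultrafilter Ordinal.{0}} {d : ℕ}

theorem mk_levelProd_lt {X : Fin d → Set (SeqNode κ)} (hκ : ℵ₀ < κ)
    (hX : ∀ i, #(X i) < lift.{1} κ) : #(LevelProd X) < lift.{1} κ := by
  have hinj : Function.Injective fun (x : LevelProd X) i =>
      (⟨x.1 i, (x.2.choose_spec i).1⟩ : X i) :=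
    fun x y hxy => Subtype.ext (funext fun i => congrArg Subtype.val (congrFun hxy i))
  refine (mk_le_of_injective hinj).trans_lt ?_
  rw [mk_pi]
  simpa using prod_lt_lift_of_lt.{0} (aleph0_lt_lift.2 hκ) hX

theorem eventually_mem_levelProd {T : Ordinal.{0} → Fin d → Set (SeqNode κ)}
    {x : Fin d → SeqNode κ} (hx : x ∈ LevelProd fun i => ultraLimit U (T · i)) :
    ∀ᶠ β in U, x ∈ LevelProd (T β) := by
  obtain ⟨α, hx⟩ := hx
  exact (eventually_all.2 fun i => (hx i).1).mono fun β h => ⟨α, fun i => ⟨h i, (hx i).2⟩⟩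

theorem IsSDMatrixIn.mk_lt {T X : Fin d → Set (SeqNode κ)} (hT : ∀ i, IsRegularTree κ (T i))
    (hX : IsSDMatrixIn κ.ord T X) (i : Fin d) : #(X i) < lift.{1} κ := by
  obtain ⟨_, δ, _, hδκ, _, _, hXt⟩ := hX
  exact (mk_le_mk_of_subset (hXt i).1).trans_lt (by simpa using (hT i).2.2.2.1 δ hδκ)

theorem IsNormalMeasure.eventually_monoOn (hU : IsNormalMeasure κ U) (hκ : ℵ₀ < κ)
    {X : Fin d → Set (SeqNode κ)} (hX : ∀ i, #(X i) < lift.{1} κ)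
    {c : Ordinal.{0} → (Fin d → SeqNode κ) → Ordinal.{0}} {c' : (Fin d → SeqNode κ) → Ordinal.{0}}
    (hc' : MonoOn c' X) (hc : ∀ x ∈ LevelProd X, ∀ᶠ β in U, c β x = c' x) :
    ∀ᶠ β in U, MonoOn (c β) X := by
  have := hU.cardinalInterFilter
  refine ((eventually_cardinal_ball (mk_levelProd_lt hκ hX)).2 hc).mono fun β hβ x hx y hy => ?_
  rw [hβ x hx, hβ y hy]
  exact hc' x hx y hy

theorem IsNormalMeasure.eventually_dominates (hU : IsNormalMeasure κ U)
    {S : Ordinal.{0} → Set (SeqNode κ)} (hS : ∀ᶠ β in U, ∀ t ∈ S β, t.IsBounded β)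
    {X : Set (SeqNode κ)} {t : SeqNode κ} {α : Ordinal.{0}}
    (hX : Dominates X (SeqLevel (ultraLimit U S) α ∩ Cone t)) :
    ∀ᶠ β in U, Dominates X (SeqLevel (S β) α ∩ Cone t) := by
  by_contra hfail
  have hbad : ∀ᶠ β in U, ∃ y : SeqNode κ, y.IsBounded β ∧
      (y ∈ S β ∧ y.len = α ∧ t.Init y ∧ ∀ x ∈ X, ¬y.Init x) := by
    refine ((Ultrafilter.eventually_not.2 hfail).and hS).mono fun β ⟨hβ, hbd⟩ => ?_
    simp only [Dominates, not_forall, not_exists, not_and] at hβ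
    obtain ⟨y, ⟨⟨hy, hylen⟩, hty⟩, hno⟩ := hβ
    exact ⟨y, hbd y hy, hy, hylen, hty, hno⟩
  obtain ⟨y, hy⟩ := hU.exists_eventually_of_eventually_exists_bounded hbad
  obtain ⟨β, -, hylen, hty, hno⟩ := hy.exists
  obtain ⟨x, hx, hyx⟩ := hX y ⟨⟨hy.mono fun _ h => h.1, hylen⟩, hty⟩
  exact hno x hx hyx

theorem IsNormalMeasure.eventually_isSDMatrixIn (hU : IsNormalMeasure κ U)
    {T : Ordinal.{0} → Fin d → Set (SeqNode κ)}
    (hT : ∀ᶠ β in U, ∀ i, IsBoundedRegularTree κ β (T β i)) {X : Fin d → Set (SeqNode κ)}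
    (hX : IsSDMatrixIn κ.ord (fun i => ultraLimit U (T · i)) X) :
    ∀ᶠ β in U, (∀ i, X i ⊆ T β i) ∧ IsSDMatrixIn β (T β) X := by
  have hsmall := hX.mk_lt fun i => hU.isRegularTree_ultraLimit (hT.mono fun _ h => h i)
  obtain ⟨α, δ, hαδ, hδκ, t, ht, hXt⟩ := hX
  have hsub : ∀ i, ∀ᶠ β in U, X i ⊆ T β i := fun i =>
    hU.eventually_subset_of_subset_ultraLimit (fun x hx => ((hXt i).1 hx).1) (hsmall i)
  have hdom : ∀ i, ∀ᶠ β in U, Dominates (X i) (SeqLevel (T β i) (α + 1) ∩ Cone (t i)) :=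
    fun i => hU.eventually_dominates (hT.mono fun β h => (h i).2) (hXt i).2
  filter_upwards [eventually_all.2 hsub, eventually_all.2 hdom,
    eventually_all.2 fun i => (ht i).1, hU.eventually_gt δ hδκ] with β hsubβ hdomβ htβ hδβ
  exact ⟨hsubβ, α, δ, hαδ, hδβ, t, fun i => ⟨htβ i, (ht i).2⟩,
    fun i => ⟨fun x hx => ⟨hsubβ i hx, ((hXt i).1 hx).2⟩, hdomβ i⟩⟩

theorem IsNormalMeasure.frequently_sdhlAt (hU : IsNormalMeasure κ U) (hκ : ℵ₀ < κ)
    {σ : Cardinal.{0}} (hσ : σ < κ) (h : SDHLAt κ d σ κ.ord) :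
    ∃ᶠ β in U, SDHLAt κ d σ β := by
  by_contra hfail
  have hcex : ∀ᶠ β in U, ∃ T : Fin d → Set (SeqNode κ), ∃ c : (Fin d → SeqNode κ) → Ordinal.{0},
      (∀ i, IsBoundedRegularTree κ β (T i)) ∧ (∀ x ∈ LevelProd T, c x < σ.ord) ∧
      ∀ X, (∀ i, X i ⊆ T i) → IsSDMatrixIn β T X → ¬MonoOn c X :=
    (not_frequently.1 hfail).mono fun β hβ => by
      simp only [SDHLAt, not_forall, not_exists, not_and] at hβ
      obtain ⟨T, hT, c, hc, hX⟩ := hβ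
      exact ⟨T, c, hT, hc, hX⟩
  obtain ⟨T, hT⟩ := hcex.choice
  obtain ⟨c, hc⟩ := hT.choice
  have hTreg : ∀ᶠ β in U, ∀ i, IsBoundedRegularTree κ β (T β i) := hc.mono fun _ h => h.1
  let L : Fin d → Set (SeqNode κ) := fun i => ultraLimit U (T · i)
  have hL : ∀ i, IsRegularTree κ (L i) := fun i =>
    hU.isRegularTree_ultraLimit (hTreg.mono fun _ h => h i)
  have := hU.cardinalInterFilter
  obtain ⟨cl, hcl⟩ := U.exists_limit_of_lt (s := LevelProd L) (ord_lt_ord.2 hσ) fun x hx =>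
    (hc.and (eventually_mem_levelProd hx)).mono fun β ⟨h, hxβ⟩ => h.2.1 x hxβ
  obtain ⟨X, hXL, hXmat, hXmono⟩ :=
    h L (fun i => ⟨hL i, fun t _ => ⟨t.len_lt, t.val_lt_ord⟩⟩) cl fun x hx => (hcl x hx).1
  have hmono := hU.eventually_monoOn hκ (hXmat.mk_lt hL) hXmono fun x ⟨α, hx⟩ =>
    (hcl x ⟨α, fun i => ⟨hXL i (hx i).1, (hx i).2⟩⟩).2
  obtain ⟨β, ⟨⟨-, -, hno⟩, hXT, hXβ⟩, hmonoβ⟩ :=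
    ((hc.and (hU.eventually_isSDMatrixIn hTreg hXmat)).and hmono).exists
  exact hno X hXT hXβ hmonoβ

end Reflection

theorem sdhl_set_stationary_general (κ : Cardinal.{0}) (hκ : IsMeasurableCard κ)
    (d : ℕ) (σ : Cardinal.{0}) (hσκ : σ < κ)
    (h : SDHL d σ κ) :
    IsStationaryIn (SDHLset d σ κ) κ.ord := by
  intro C hC
  obtain ⟨U, hU⟩ := hκ.exists_isNormalMeasure
  have hκ₀ : ℵ₀ < κ := hκ.1
  have hgood : ∀ᶠ β in U,
      β ∈ C ∧ β < κ.ord ∧ β.card.ord = β ∧ σ.ord < β ∧ (ℵ₀ : Cardinal.{0}).ord < β :=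
    (hU.eventually_mem_of_isClubIn hκ₀.le hC).and <| hU.eventually_lt_ord.and <|
      (hU.eventually_card_ord_eq hκ₀.le).and <| (hU.eventually_gt _ (ord_lt_ord.2 hσκ)).and <|
        hU.eventually_gt _ (ord_lt_ord.2 hκ₀)
  obtain ⟨β, hSD, hβC, hβκ, hβcard, hσβ, hωβ⟩ :=
    ((hU.frequently_sdhlAt hκ₀ hσκ h.sdhlAt).and_eventually hgood).exists
  rw [← hβcard] at hσβ hSD
  exact ⟨β, ⟨hβκ, ord_le.1 hωβ.le, hβcard, ord_lt_ord.1 hσβ, hSD.sdhl (hβcard.le.trans hβκ.le)⟩,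
    hβC⟩

/-- For measurable κ, if SDHL(d,σ,κ) holds then the set of infinite
cardinals α < κ with σ < α at which SDHL(d,σ,α) holds is stationary in κ. -/
theorem sdhl_set_stationary (κ : Cardinal.{0}) (hκ : IsMeasurableCard κ)
    (d : ℕ) (hd : 1 ≤ d) (σ : Cardinal.{0}) (hσ : 1 ≤ σ) (hσκ : σ < κ)
    (h : SDHL d σ κ) :
    IsStationaryIn (SDHLset d σ κ) κ.ord :=
  sdhl_set_stationary_general κ hκ d σ hσκ h
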